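/- arXiv:2301.06467 — 7 statements merged into one kernel-verified Lean document; each statement's English description precedes it below -/
import Mathlib

section
/- Let (X,d) be a metric space with Nagata dimension exactly n ∈ ℕ∪{0}, and let ε ∈ (0,1). Then for every integer k with 0 ≤ k < n, there is no Lipschitz light map from the snowflake (X,d^ε) into ℝ^k. -/
open Metric Set
open scoped ENNReal NNReal

/-- `l` is an `r`-path (consecutive distances at most `r`) lying in the set `S`. -/
def IsRPathIn {X : Type*} [PseudoMetricSpace X] (r : ℝ) (S : Set X) (l : List X) : Prop :=
  (∀ z ∈ l, z ∈ S) ∧ l.Chain' (fun a b => dist a b ≤ r)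

/-- `x` and `y` lie in the same `r`-component of `S`: they are joined by an `r`-path in `S`. -/
def SameRComponent {X : Type*} [PseudoMetricSpace X] (r : ℝ) (S : Set X) (x y : X) : Prop :=
  ∃ l : List X, IsRPathIn r S l ∧ l.head? = some x ∧ l.getLast? = some y

/-- `f` is Lipschitz light with constant `C`: it is `C`-Lipschitz and, for every `r > 0` and
every `W ⊆ Y` with `diam W ≤ r`, every `r`-component of `f ⁻¹' W` has diameter at most `C * r`. -/
def LipschitzLightWith {X Y : Type*} [PseudoMetricSpace X] [PseudoMetricSpace Y]
    (C : ℝ) (f : X → Y) : Prop :=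
  (∀ x y : X, dist (f x) (f y) ≤ C * dist x y) ∧
  ∀ r : ℝ, 0 < r → ∀ W : Set Y, EMetric.diam W ≤ ENNReal.ofReal r →
    ∀ x y : X, SameRComponent r (f ⁻¹' W) x y → dist x y ≤ C * r

/-- `X` has Nagata dimension at most `n` with constant `c`: for every `s > 0` there is a
`c*s`-bounded covering of `X` with `s`-multiplicity at most `n + 1`. -/
def NagataWith (X : Type*) [PseudoMetricSpace X] (n : ℕ) (c : ℝ) : Prop :=
  ∀ s : ℝ, 0 < s → ∃ 𝓑 : Set (Set X), (⋃₀ 𝓑 = univ) ∧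
    (∀ B ∈ 𝓑, EMetric.diam B ≤ ENNReal.ofReal (c * s)) ∧
    ∀ E : Set X, EMetric.diam E ≤ ENNReal.ofReal s →
      {B ∈ 𝓑 | (B ∩ E).Nonempty}.encard ≤ (n + 1 : ℕ)

/-- The Nagata dimension of a metric space, as an element of `ℕ∞`. -/
noncomputable def nagataDim (X : Type*) [PseudoMetricSpace X] : ℕ∞ :=
  sInf ((fun n : ℕ => (n : ℕ∞)) '' {n : ℕ | ∃ c : ℝ, 0 < c ∧ NagataWith X n c})

/-- The snowflake metric space `(X, d^ε)`. -/
noncomputable def Snowflake {X : Type*} (m : MetricSpace X) {ε : ℝ}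
    (h0 : 0 < ε) (h1 : ε ≤ 1) : MetricSpace X :=
  letI := m
  { dist := fun x y => dist x y ^ ε
    dist_self := fun x => by simp [Real.zero_rpow h0.ne']
    dist_comm := fun x y => by simp only [dist_comm]
    dist_triangle := fun x y z => by
      calc dist x z ^ ε ≤ (dist x y + dist y z) ^ ε :=
            Real.rpow_le_rpow dist_nonneg (dist_triangle x y z) h0.le
        _ ≤ dist x y ^ ε + dist y z ^ ε := by
            have h := NNReal.rpow_add_le_add_rpow (Real.toNNReal (dist x y))
              (Real.toNNReal (dist y z)) h0.le h1
            have h2 : ((Real.toNNReal (dist x y) + Real.toNNReal (dist y z) : ℝ≥0) : ℝ) ^ ε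
                ≤ ((Real.toNNReal (dist x y) : ℝ)) ^ ε + ((Real.toNNReal (dist y z) : ℝ)) ^ ε := by
              exact_mod_cast h
            simpa [Real.coe_toNNReal _ dist_nonneg] using h2
    eq_of_dist_eq_zero := fun {x y} h => by
      have : dist x y = 0 := (Real.rpow_eq_zero dist_nonneg h0.ne').mp h
      exact eq_of_dist_eq_zero this }

/-!
A Lipschitz light map `f : X → Y` pulls Nagata covers back. Cover `Y` at scale `C s` and take
the `r`-components of the preimages of its members, for `r` a fixed multiple of `s`: lightness
bounds their diameters, and a set `E` of diameter `≤ s` meets at most one component per member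
that meets the set `f '' E` of diameter `≤ C s`. Euclidean space `ℝᵏ` has Nagata dimension at
most `k`: in each of `k + 1` colors take a grid of cubes that are `2s` apart; a point lies in a
cube of color `j` unless one of its `k` coordinates is close to a hyperplane of color `j`, so
some color always works. Finally `(X, d)` and `(X, d^ε)` have the same Nagata covers, with the
scales `s` and `s^ε` exchanged. So a Lipschitz light map `(X, d^ε) → ℝᵏ` would give
`dim_N X ≤ k < n`.
-/
section RComponent

variable {X : Type*} [PseudoMetricSpace X] {r : ℝ} {S : Set X} {x y z : X}

namespace SameRComponent

lemma mem_left (h : SameRComponent r S x y) : x ∈ S := by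
  obtain ⟨l, ⟨hmem, -⟩, hx, -⟩ := h
  exact hmem x (List.mem_of_mem_head? hx)

lemma refl (hx : x ∈ S) : SameRComponent r S x x :=
  ⟨[x], ⟨by simpa using hx, List.isChain_singleton x⟩, rfl, rfl⟩

lemma symm (h : SameRComponent r S x y) : SameRComponent r S y x := by
  obtain ⟨l, ⟨hmem, hchain⟩, hx, hy⟩ := h
  refine ⟨l.reverse, ⟨by simpa using hmem, ?_⟩, by simpa using hy, by simpa using hx⟩
  exact List.isChain_reverse.mpr (hchain.imp fun a b hab => by rwa [dist_comm])

lemma mem_right (h : SameRComponent r S x y) : y ∈ S :=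
  h.symm.mem_left

lemma trans (hr : 0 ≤ r) (hxy : SameRComponent r S x y) (hyz : SameRComponent r S y z) :
    SameRComponent r S x z := by
  obtain ⟨l₁, ⟨hmem₁, hchain₁⟩, hx, hy₁⟩ := hxy
  obtain ⟨l₂, ⟨hmem₂, hchain₂⟩, hy₂, hz⟩ := hyz
  refine ⟨l₁ ++ l₂, ⟨fun w hw => (List.mem_append.mp hw).elim (hmem₁ w) (hmem₂ w), ?_⟩,
    by rw [List.head?_append, hx]; rfl, by rw [List.getLast?_append, hz]; rfl⟩
  refine hchain₁.append hchain₂ fun a ha b hb => ?_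
  rw [hy₁, Option.mem_some_iff] at ha
  rw [hy₂, Option.mem_some_iff] at hb
  subst ha hb
  rwa [dist_self]

end SameRComponent

lemma sameRComponent_of_dist_le (hx : x ∈ S) (hy : y ∈ S) (hxy : dist x y ≤ r) :
    SameRComponent r S x y :=
  ⟨[x, y], ⟨by simp [hx, hy], List.isChain_pair.mpr hxy⟩, rfl, rfl⟩

def rComponent (r : ℝ) (S : Set X) (x : X) : Set X := {y | SameRComponent r S x y}

lemma rComponent_eq_of_mem (hr : 0 ≤ r) (hy : y ∈ rComponent r S x) :
    rComponent r S y = rComponent r S x :=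
  Set.ext fun _ => ⟨hy.trans hr, hy.symm.trans hr⟩

end RComponent

lemma dist_le_of_ediam_le_ofReal {X : Type*} [PseudoMetricSpace X] {E : Set X} {s : ℝ} {x y : X}
    (hs : 0 ≤ s) (hE : ediam E ≤ ENNReal.ofReal s) (hx : x ∈ E) (hy : y ∈ E) : dist x y ≤ s :=
  (edist_le_ofReal hs).mp ((edist_le_ediam_of_mem hx hy).trans hE)

lemma Set.encard_sep_image_le_encard_image {α ι κ : Type*} (g : ι → α) (label : ι → κ)
    {S : Set ι} {P : α → Prop}
    (h : ∀ i ∈ S, ∀ j ∈ S, P (g i) → P (g j) → label i = label j → g i = g j) :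
    {a ∈ g '' S | P a}.encard ≤ (label '' {i ∈ S | P (g i)}).encard := by
  set T := {i ∈ S | P (g i)}
  have hsep : {a ∈ g '' S | P a} = g '' T := by
    ext a
    constructor
    · rintro ⟨⟨i, hi, rfl⟩, hP⟩
      exact ⟨i, ⟨hi, hP⟩, rfl⟩
    · rintro ⟨i, ⟨hi, hP⟩, rfl⟩
      exact ⟨⟨i, hi, rfl⟩, hP⟩
  rw [hsep]
  rcases T.eq_empty_or_nonempty with hT | ⟨i₀, -⟩
  · simp [hT]
  have : Nonempty ι := ⟨i₀⟩
  refine encard_le_encard_of_injOn (f := fun a => label (Function.invFunOn g T a))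
    (fun a ha => mem_image_of_mem _ (Function.invFunOn_mem ha)) fun a ha b hb hab => ?_
  obtain ⟨⟨hiS, hiP⟩, hia⟩ := Function.invFunOn_pos ha
  obtain ⟨⟨hjS, hjP⟩, hjb⟩ := Function.invFunOn_pos hb
  rw [← hia, ← hjb]
  exact h _ hiS _ hjS hiP hjP hab

lemma NagataWith.of_lipschitzLightWith {X Y : Type*} [PseudoMetricSpace X] [PseudoMetricSpace Y]
    {k : ℕ} {C c : ℝ} {f : X → Y} (hC : 0 < C) (hf : LipschitzLightWith C f)
    (hY : NagataWith Y k c) : NagataWith X k (C * max (c * C) 1) := by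
  intro s hs
  obtain ⟨𝓑, hcover, hbounded, hmult⟩ := hY (C * s) (by positivity)
  set r := max (c * C) 1 * s
  have hr : 0 < r := by positivity
  have hsr : s ≤ r := le_mul_of_one_le_left hs.le (le_max_right _ _)
  have hB : ∀ B ∈ 𝓑, ediam B ≤ ENNReal.ofReal r := fun B hB =>
    (hbounded B hB).trans <| ENNReal.ofReal_le_ofReal <| by
      rw [← mul_assoc]; exact mul_le_mul_of_nonneg_right (le_max_left _ _) hs.le
  let piece : Set Y × X → Set X := fun p => rComponent r (f ⁻¹' p.1) p.2
  let T : Set (Set Y × X) := {p | p.1 ∈ 𝓑 ∧ f p.2 ∈ p.1}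
  refine ⟨piece '' T, ?_, ?_, fun E hE => ?_⟩
  · refine eq_univ_of_forall fun x => ?_
    obtain ⟨B, hB𝓑, hxB⟩ := hcover.symm ▸ mem_univ (f x)
    exact ⟨piece (B, x), ⟨(B, x), ⟨hB𝓑, hxB⟩, rfl⟩, SameRComponent.refl hxB⟩
  · rintro _ ⟨⟨B, x⟩, ⟨hB𝓑, -⟩, rfl⟩
    refine ediam_le_of_forall_dist_le fun a ha b hb => ?_
    have hab : SameRComponent r (f ⁻¹' B) a b := ha.symm.trans hr.le hb
    exact (hf.2 r hr B (hB B hB𝓑) a b hab).trans_eq (by ring)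
  · have hfE : ediam (f '' E) ≤ ENNReal.ofReal (C * s) := by
      refine ediam_le_of_forall_dist_le ?_
      rintro _ ⟨a, ha, rfl⟩ _ ⟨b, hb, rfl⟩
      exact (hf.1 a b).trans <| mul_le_mul_of_nonneg_left
        (dist_le_of_ediam_le_ofReal hs.le hE ha hb) hC.le
    refine (encard_sep_image_le_encard_image piece Prod.fst ?_).trans <|
      (encard_le_encard ?_).trans (hmult _ hfE)
    · rintro ⟨B, x⟩ - ⟨B', x'⟩ - ⟨w, hw, hwE⟩ ⟨w', hw', hw'E⟩ (rfl : B = B')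
      have hww' : SameRComponent r (f ⁻¹' B) w w' :=
        sameRComponent_of_dist_le hw.mem_right hw'.mem_right
          ((dist_le_of_ediam_le_ofReal hs.le hE hwE hw'E).trans hsr)
      calc piece (B, x) = rComponent r (f ⁻¹' B) w := (rComponent_eq_of_mem hr.le hw).symm
        _ = rComponent r (f ⁻¹' B) w' := (rComponent_eq_of_mem hr.le hww').symm
        _ = piece (B, x') := rComponent_eq_of_mem hr.le hw'
    · rintro _ ⟨⟨B, x⟩, ⟨⟨hB𝓑, -⟩, w, hw, hwE⟩, rfl⟩
      exact ⟨hB𝓑, f w, hw.mem_right, w, hwE, rfl⟩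

/-- The intervals of color `j` are the `[j + K t, j + K (t + 1)]`, `t : ℤ`, shrunk by `1/2` at both
ends, so that two of them are at distance `≥ 1`. -/
def colorIcc (K j : ℕ) (t : ℤ) : Set ℝ := Icc (j + K * t + 1 / 2) (j + K * t + K - 1 / 2)

section ColorIcc

variable {K j : ℕ} {t t' : ℤ} {y y' : ℝ}

/-- A real number misses every interval of color `j` only if it is within `1/2` of an integer
congruent to `j` modulo `K`. -/
lemma exists_mem_colorIcc (hj : j < K) (hy : (round y % K).toNat ≠ j) :
    ∃ t : ℤ, y ∈ colorIcc K j t := by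
  have hK : (0 : ℝ) < K := by exact_mod_cast j.zero_le.trans_lt hj
  have hround : ∀ t : ℤ, round y ≠ j + K * t := fun t ht => hy <| by
    rw [ht, Int.add_mul_emod_self_left, Int.emod_eq_of_lt (by positivity) (by omega)]
    rfl
  set t := ⌊(y - j) / K⌋
  have ht : (t : ℝ) * K ≤ y - j := (le_div_iff₀ hK).mp (Int.floor_le _)
  have ht' : y - j < (t + 1) * K := (div_lt_iff₀ hK).mp (Int.lt_floor_add_one _)
  refine ⟨t, ?_, ?_⟩
  · by_contra! h
    exact hround t (round_eq_iff.mpr ⟨by push_cast; linarith, by push_cast; linarith⟩)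
  · by_contra! h
    exact hround (t + 1) (round_eq_iff.mpr ⟨by push_cast; linarith, by push_cast; linarith⟩)

lemma eq_of_mem_colorIcc (hy : y ∈ colorIcc K j t) (hy' : y' ∈ colorIcc K j t')
    (hyy' : |y - y'| < 1) : t = t' := by
  obtain ⟨hy₁, hy₂⟩ := hy
  obtain ⟨hy'₁, hy'₂⟩ := hy'
  have hK : (0 : ℝ) ≤ K := K.cast_nonneg
  rw [abs_lt] at hyy'
  by_contra hne
  rcases lt_or_gt_of_ne hne with h | h
  · have h' : (t : ℝ) + 1 ≤ t' := by exact_mod_cast h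
    nlinarith
  · have h' : (t' : ℝ) + 1 ≤ t := by exact_mod_cast h
    nlinarith

lemma abs_sub_le_of_mem_colorIcc (hy : y ∈ colorIcc K j t) (hy' : y' ∈ colorIcc K j t) :
    |y - y'| ≤ K - 1 :=
  abs_sub_le_iff.mpr ⟨by linarith [hy.2, hy'.1], by linarith [hy.1, hy'.2]⟩

end ColorIcc

def colorCube (k : ℕ) (s : ℝ) (j : ℕ) (v : Fin k → ℤ) : Set (EuclideanSpace ℝ (Fin k)) :=
  {x | ∀ i, x i / (2 * s) ∈ colorIcc (k + 1) j (v i)}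

section ColorCube

variable {k : ℕ} {s : ℝ} {j : ℕ} {v v' : Fin k → ℤ} {a b : EuclideanSpace ℝ (Fin k)}

lemma exists_mem_colorCube (s : ℝ) (x : EuclideanSpace ℝ (Fin k)) :
    ∃ j < k + 1, ∃ v, x ∈ colorCube k s j v := by
  let badColor : Fin k → ℕ := fun i => (round (x i / (2 * s)) % (k + 1 : ℕ)).toNat
  obtain ⟨j, hj, hgood⟩ := Finset.exists_mem_notMem_of_card_lt_card
    (s := Finset.univ.image badColor) (t := Finset.range (k + 1)) <| by
      calc _ ≤ Finset.univ.card := Finset.card_image_le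
        _ < _ := by simp
  have hj : j < k + 1 := Finset.mem_range.mp hj
  choose v hv using fun i =>
    exists_mem_colorIcc hj fun h => hgood (Finset.mem_image.mpr ⟨i, Finset.mem_univ i, h⟩)
  exact ⟨j, hj, v, hv⟩

lemma dist_le_of_mem_colorCube (hs : 0 < s) (ha : a ∈ colorCube k s j v)
    (hb : b ∈ colorCube k s j v) : dist a b ≤ 2 * k * √k * s := by
  have h2s : 0 < 2 * s := by positivity
  have hcoord : ∀ i, dist (a i) (b i) ≤ 2 * k * s := fun i => by
    have h := abs_sub_le_of_mem_colorIcc (ha i) (hb i)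
    rw [← sub_div, abs_div, abs_of_pos h2s, div_le_iff₀ h2s] at h
    rw [Real.dist_eq]
    push_cast at h
    linarith
  calc dist a b = √(∑ i, dist (a i) (b i) ^ 2) := EuclideanSpace.dist_eq a b
    _ ≤ √(∑ _i : Fin k, (2 * k * s) ^ 2) :=
      Real.sqrt_le_sqrt (Finset.sum_le_sum fun i _ => pow_le_pow_left₀ dist_nonneg (hcoord i) 2)
    _ = 2 * k * √k * s := by
      rw [Finset.sum_const, Finset.card_univ, Fintype.card_fin, nsmul_eq_mul,
        Real.sqrt_mul k.cast_nonneg, Real.sqrt_sq (by positivity)]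
      ring

lemma eq_of_mem_colorCube (hs : 0 < s) (ha : a ∈ colorCube k s j v)
    (hb : b ∈ colorCube k s j v') (hab : dist a b ≤ s) : v = v' :=
  have h2s : 0 < 2 * s := by positivity
  funext fun i => eq_of_mem_colorIcc (ha i) (hb i) <| by
    rw [← sub_div, abs_div, abs_of_pos h2s, div_lt_one h2s, ← Real.dist_eq]
    linarith [PiLp.dist_apply_le a b i]

end ColorCube

lemma nagataWith_euclideanSpace (k : ℕ) :
    NagataWith (EuclideanSpace ℝ (Fin k)) k (2 * k * √k) := by
  intro s hs
  let cube : ℕ × (Fin k → ℤ) → Set (EuclideanSpace ℝ (Fin k)) := fun p => colorCube k s p.1 p.2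
  refine ⟨cube '' {p | p.1 < k + 1}, ?_, ?_, fun E hE => ?_⟩
  · refine eq_univ_of_forall fun x => ?_
    obtain ⟨j, hj, v, hx⟩ := exists_mem_colorCube s x
    exact ⟨cube (j, v), ⟨(j, v), hj, rfl⟩, hx⟩
  · rintro _ ⟨⟨j, v⟩, -, rfl⟩
    exact ediam_le_of_forall_dist_le fun a ha b hb => dist_le_of_mem_colorCube hs ha hb
  · refine (encard_sep_image_le_encard_image cube Prod.fst ?_).trans ?_
    · rintro ⟨j, v⟩ - ⟨j', v'⟩ - ⟨a, ha, haE⟩ ⟨b, hb, hbE⟩ (rfl : j = j')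
      exact congrArg (colorCube k s j)
        (eq_of_mem_colorCube hs ha hb (dist_le_of_ediam_le_ofReal hs.le hE haE hbE))
    · calc _ ≤ ((Finset.range (k + 1) : Finset ℕ) : Set ℕ).encard :=
            encard_le_encard <| by
              rintro _ ⟨⟨j, v⟩, ⟨hj, -⟩, rfl⟩
              exact Finset.mem_coe.mpr (Finset.mem_range.mpr hj)
        _ = (k + 1 : ℕ) := by rw [encard_coe_eq_coe_finsetCard, Finset.card_range]

lemma NagataWith.of_snowflake {X : Type*} (m : MetricSpace X) {ε : ℝ} (h0 : 0 < ε) (h1 : ε ≤ 1)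
    {k : ℕ} {c : ℝ} (hc : 0 ≤ c) (h : @NagataWith X (Snowflake m h0 h1).toPseudoMetricSpace k c) :
    @NagataWith X m.toPseudoMetricSpace k (c ^ ε⁻¹) := by
  let := m
  intro s hs
  obtain ⟨𝓑, hcover, hbounded, hmult⟩ := h (s ^ ε) (by positivity)
  refine ⟨𝓑, hcover, fun B hB => ediam_le_of_forall_dist_le fun a ha b hb => ?_,
    fun E hE => hmult E ?_⟩
  · have hab : dist a b ^ ε ≤ c * s ^ ε :=
      @dist_le_of_ediam_le_ofReal X (Snowflake m h0 h1).toPseudoMetricSpace _ _ a b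
        (by positivity) (hbounded B hB) ha hb
    calc dist a b = (dist a b ^ ε) ^ ε⁻¹ := (Real.rpow_rpow_inv dist_nonneg h0.ne').symm
      _ ≤ (c * s ^ ε) ^ ε⁻¹ := Real.rpow_le_rpow (by positivity) hab (by positivity)
      _ = c ^ ε⁻¹ * s := by rw [Real.mul_rpow hc (by positivity), Real.rpow_rpow_inv hs.le h0.ne']
  · exact @ediam_le_of_forall_dist_le X E (Snowflake m h0 h1).toPseudoMetricSpace _
      fun a ha b hb =>
        Real.rpow_le_rpow dist_nonneg (dist_le_of_ediam_le_ofReal hs.le hE ha hb) h0.le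

lemma nagataDim_le_of_nagataWith {X : Type*} [PseudoMetricSpace X] {k : ℕ} {c : ℝ} (hc : 0 < c)
    (h : NagataWith X k c) : nagataDim X ≤ k :=
  sInf_le ⟨k, ⟨c, hc, h⟩, rfl⟩

/-- If `(X,d)` has Nagata dimension exactly `n`, then for `ε ∈ (0,1)` and `k < n` there is
no Lipschitz light map from the snowflake `(X, d^ε)` into `ℝᵏ`. -/
theorem no_lipschitzLight_below_nagataDim (X : Type*) (m : MetricSpace X) (n : ℕ)
    (hn : @nagataDim X m.toPseudoMetricSpace = (n : ℕ∞))
    (ε : ℝ) (hε0 : 0 < ε) (hε1 : ε < 1) (k : ℕ) (hk : k < n) :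
    ¬ ∃ (C : ℝ) (f : X → EuclideanSpace ℝ (Fin k)), 0 < C ∧
        @LipschitzLightWith X (EuclideanSpace ℝ (Fin k))
          (Snowflake m hε0 hε1.le).toPseudoMetricSpace inferInstance C f := by
  rintro ⟨C, f, hC, hf⟩
  have hX := NagataWith.of_snowflake m hε0 hε1.le (by positivity)
    (@NagataWith.of_lipschitzLightWith _ _ (Snowflake m hε0 hε1.le).toPseudoMetricSpace _ _ _ _ _
      hC hf (nagataWith_euclideanSpace k))
  have hdim := nagataDim_le_of_nagataWith (by positivity) hX
  rw [hn, Nat.cast_le] at hdim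
  omega
end

section
/- Let X be a metric space whose Nagata dimension is at most n with Nagata constant C. Then there exist constants c ≥ 1 and r_0 > 0, depending only on n and C, such that for every r ≥ r_0 there is a sequence of coverings B^j of X (j ∈ ℤ) with the following properties: (i) for each j ∈ ℤ, B^j = ∪_{k=0}^n B^j_k, where each family B^j_k is c·r^j-bounded and has (1/2)r^j-multiplicity at most 1; (ii) for each j ∈ ℤ and x ∈ X, there is a member B ∈ B^j containing the closed ball of radius r^j about x; (iii) every member of every B^j is open. -/
open Metric Set
open scoped ENNReal NNReal

/-! Fix a scale `t > 0`, put `M = 3 (n + 2) t` and take a Nagata covering `𝓑` at scale `2M`: every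
point is within `M` of at most `n + 1` of its members. The bumps `τ_B = (M - d(·, B))⁺` are
`1`-Lipschitz. The cell of a finite `S ⊆ 𝓑` is the open set where each `τ_B`, `B ∈ S`, exceeds every
`τ_B`, `B ∉ S`, by more than `t / 2`; by the Lipschitz bound, cells of distinct index sets of equal
size are more than `t / 2` apart, so sorting cells by `|S|` gives `n + 1` families of multiplicity
one. At a point `x` the at most `n + 1` positive values `τ_B(x)` leave, by pigeonhole, a gap of
width `3t` somewhere below `M = τ_{B₀}(x)` (`x ∈ B₀`), and the members above the gap form an `S`
whose cell contains the closed ball of radius `t` about `x`. A cell lies in the `M`-thickening of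
any of its members, which bounds its diameter. Finally take `t = rʲ`. -/

structure IsAdjustedCover {X : Type*} [PseudoMetricSpace X] {n : ℕ}
    (𝓕 : Fin (n + 1) → Set (Set X)) (D t : ℝ) : Prop where
  isOpen : ∀ k, ∀ B ∈ 𝓕 k, IsOpen B
  ediam_le : ∀ k, ∀ B ∈ 𝓕 k, ediam B ≤ ENNReal.ofReal D
  encard_le_one : ∀ k (E : Set X), ediam E ≤ ENNReal.ofReal (t / 2) →
    {B ∈ 𝓕 k | (B ∩ E).Nonempty}.encard ≤ 1
  exists_closedBall_subset : ∀ x, ∃ k, ∃ B ∈ 𝓕 k, closedBall x t ⊆ B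

namespace AdjustedCover

variable {X : Type*} [PseudoMetricSpace X]

noncomputable def bump (M : ℝ) (B : Set X) (x : X) : ℝ := max (M - infDist x B) 0

/-- An empty supremum is `0` in `ℝ`, which is the right value here since bumps are
nonnegative. -/
noncomputable def outerBump (M : ℝ) (𝓑 : Set (Set X)) (S : Finset (Set X)) (x : X) : ℝ :=
  ⨆ B : ↥(𝓑 \ ↑S), bump M B x

def cell (M t : ℝ) (𝓑 : Set (Set X)) (S : Finset (Set X)) : Set X :=
  {x | ∀ B ∈ S, outerBump M 𝓑 S x + t / 2 < bump M B x}

def cellFamily (M t : ℝ) (𝓑 : Set (Set X)) (k : ℕ) : Set (Set X) :=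
  cell M t 𝓑 '' {S | ↑S ⊆ 𝓑 ∧ S.card = k + 1}

variable {M t a : ℝ} {𝓑 : Set (Set X)} {S S₁ S₂ : Finset (Set X)} {B : Set X} {x y : X}

lemma bump_nonneg (M : ℝ) (B : Set X) (x : X) : 0 ≤ bump M B x := le_max_right _ _

lemma bump_le_max (M : ℝ) (B : Set X) (x : X) : bump M B x ≤ max M 0 :=
  max_le_max_right 0 (sub_le_self M infDist_nonneg)

lemma bump_of_mem (hM : 0 ≤ M) (hx : x ∈ B) : bump M B x = M := by
  rw [bump, infDist_zero_of_mem hx, sub_zero, max_eq_left hM]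

lemma bump_le_add_dist (M : ℝ) (B : Set X) (x y : X) : bump M B x ≤ bump M B y + dist x y := by
  have hinf := infDist_le_infDist_add_dist (x := y) (y := x) (s := B)
  have hy : M - infDist y B ≤ bump M B y := le_max_left _ _
  rw [dist_comm] at hinf
  exact max_le (by linarith) (add_nonneg (bump_nonneg _ _ _) dist_nonneg)

lemma continuous_bump (M : ℝ) (B : Set X) : Continuous (bump M B) :=
  (LipschitzWith.of_le_add (bump_le_add_dist M B)).continuous

lemma bump_pos_iff (hB : B.Nonempty) : 0 < bump M B x ↔ x ∈ thickening M B := by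
  rw [mem_thickening_iff_infDist_lt hB, bump, lt_max_iff, sub_pos, lt_self_iff_false, or_false]

lemma bump_le_outerBump (hB : B ∈ 𝓑) (hBS : B ∉ S) : bump M B x ≤ outerBump M 𝓑 S x := by
  have hbdd : BddAbove (range fun B : ↥(𝓑 \ ↑S) => bump M B x) := by
    refine ⟨max M 0, ?_⟩
    rintro _ ⟨B, rfl⟩
    exact bump_le_max _ _ _
  exact le_ciSup hbdd (⟨B, hB, hBS⟩ : ↥(𝓑 \ ↑S))

lemma outerBump_le (ha : 0 ≤ a) (h : ∀ B ∈ 𝓑, B ∉ S → bump M B x ≤ a) :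
    outerBump M 𝓑 S x ≤ a :=
  Real.iSup_le (fun B => h B B.2.1 B.2.2) ha

lemma outerBump_nonneg (M : ℝ) (𝓑 : Set (Set X)) (S : Finset (Set X)) (x : X) :
    0 ≤ outerBump M 𝓑 S x :=
  Real.iSup_nonneg fun _ => bump_nonneg _ _ _

lemma outerBump_le_add_dist (M : ℝ) (𝓑 : Set (Set X)) (S : Finset (Set X)) (x y : X) :
    outerBump M 𝓑 S x ≤ outerBump M 𝓑 S y + dist x y :=
  outerBump_le (add_nonneg (outerBump_nonneg _ _ _ _) dist_nonneg) fun B hB hBS =>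
    (bump_le_add_dist M B x y).trans (add_le_add_left (bump_le_outerBump hB hBS) _)

lemma continuous_outerBump (M : ℝ) (𝓑 : Set (Set X)) (S : Finset (Set X)) :
    Continuous (outerBump M 𝓑 S) :=
  (LipschitzWith.of_le_add (outerBump_le_add_dist M 𝓑 S)).continuous

lemma encard_bump_pos_le {𝓑₀ : Set (Set X)} {N : ℕ∞} (hM : 0 ≤ M)
    (hmult : ∀ E : Set X, ediam E ≤ ENNReal.ofReal (2 * M) →
      {B ∈ 𝓑₀ | (B ∩ E).Nonempty}.encard ≤ N) (x : X) :
    {B ∈ {B ∈ 𝓑₀ | B.Nonempty} | 0 < bump M B x}.encard ≤ N := by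
  have hball : ediam (closedBall x M) ≤ ENNReal.ofReal (2 * M) :=
    ediam_le fun p hp q hq => (edist_le_ofReal (by positivity)).2 (by
      linarith [dist_triangle_right p q x, mem_closedBall.1 hp, mem_closedBall.1 hq])
  refine (encard_mono ?_).trans (hmult _ hball)
  rintro B ⟨⟨hB, hne⟩, hpos⟩
  obtain ⟨b, hb, hxb⟩ := mem_thickening_iff.1 ((bump_pos_iff hne).1 hpos)
  exact ⟨hB, b, hb, mem_closedBall'.2 hxb.le⟩

lemma isOpen_cell (M t : ℝ) (𝓑 : Set (Set X)) (S : Finset (Set X)) : IsOpen (cell M t 𝓑 S) := by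
  have : cell M t 𝓑 S = ⋂ B ∈ S, {x | outerBump M 𝓑 S x + t / 2 < bump M B x} := by
    ext x; simp [cell]
  rw [this]
  exact isOpen_biInter_finset fun B _ =>
    isOpen_lt ((continuous_outerBump M 𝓑 S).add continuous_const) (continuous_bump M B)

lemma ediam_cell_le (hM : 0 ≤ M) (ht : 0 ≤ t) (hBS : B ∈ S) (hB : B.Nonempty) :
    ediam (cell M t 𝓑 S) ≤ ediam B + 2 * ENNReal.ofReal M := by
  have hsub : cell M t 𝓑 S ⊆ thickening M B := fun x hx =>
    (bump_pos_iff hB).1 <| lt_of_le_of_lt (by linarith [outerBump_nonneg M 𝓑 S x]) (hx B hBS)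
  have := ediam_thickening_le (s := B) M.toNNReal
  rw [Real.coe_toNNReal _ hM] at this
  exact (ediam_mono hsub).trans this

lemma lt_dist_of_mem_cell (h₁ : ↑S₁ ⊆ 𝓑) (h₂ : ↑S₂ ⊆ 𝓑) (hcard : S₁.card = S₂.card)
    (hne : S₁ ≠ S₂) (hx : x ∈ cell M t 𝓑 S₁) (hy : y ∈ cell M t 𝓑 S₂) : t / 2 < dist x y := by
  obtain ⟨B₁, hB₁, hB₁'⟩ := Finset.not_subset.1
    fun h => hne (Finset.eq_of_subset_of_card_le h hcard.ge)
  obtain ⟨B₂, hB₂, hB₂'⟩ := Finset.not_subset.1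
    fun h => hne (Finset.eq_of_subset_of_card_le h hcard.le).symm
  have := hx B₁ hB₁
  have := hy B₂ hB₂
  have := bump_le_outerBump (M := M) (x := x) (h₂ hB₂) hB₂'
  have := bump_le_outerBump (M := M) (x := y) (h₁ hB₁) hB₁'
  have := bump_le_add_dist M B₁ x y
  have := bump_le_add_dist M B₂ y x
  rw [dist_comm y x] at this
  linarith

lemma closedBall_subset_cell (ht : 0 < t) (ha : 2 * t ≤ a) (hS : ∀ B ∈ S, a < bump M B x)
    (hout : ∀ B ∈ 𝓑, B ∉ S → bump M B x ≤ a - 3 * t) : closedBall x t ⊆ cell M t 𝓑 S := by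
  intro y hy B hB
  rw [mem_closedBall] at hy
  have houter : outerBump M 𝓑 S y ≤ a - 2 * t :=
    outerBump_le (by linarith) fun B' hB' hB'S => by
      linarith [bump_le_add_dist M B' y x, hout B' hB' hB'S]
  have := bump_le_add_dist M B x y
  rw [dist_comm] at this
  linarith [hS B hB]

/-- Pigeonhole over the `n + 1` disjoint windows `(M - (j + 1) * w, M - j * w]`, `1 ≤ j ≤ n + 1`;
`v` lies in window `j` iff `⌊(M - v) / w⌋₊ = j`. -/
lemma exists_gap_below {s : Finset ℝ} {n : ℕ} (hs : s.card ≤ n) (M : ℝ) {w : ℝ} (hw : 0 < w) :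
    ∃ a, M - (n + 2) * w ≤ a - w ∧ a < M ∧ ∀ v ∈ s, v ≤ a → v ≤ a - w := by
  obtain ⟨j, hj, hjs⟩ := Finset.exists_mem_notMem_of_card_lt_card
    (s := s.image fun v => ⌊(M - v) / w⌋₊) (t := Finset.Icc 1 (n + 1))
    (by simpa using Finset.card_image_le.trans_lt (Nat.lt_succ_of_le hs))
  rw [Finset.mem_Icc] at hj
  have hj₁ : (1 : ℝ) ≤ j := by exact_mod_cast hj.1
  have hj₂ : (j : ℝ) ≤ n + 1 := by exact_mod_cast hj.2
  refine ⟨M - j * w, by nlinarith, by nlinarith, fun v hv hva => ?_⟩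
  by_contra! hlt
  refine hjs (Finset.mem_image.2 ⟨v, hv, (Nat.floor_eq_iff ?_).2 ⟨?_, ?_⟩⟩)
  · exact div_nonneg (by nlinarith) hw.le
  · rw [le_div_iff₀ hw]; linarith
  · rw [div_lt_iff₀ hw]; linarith

lemma exists_closedBall_subset_cell {n : ℕ} (ht : 0 < t) (hM : 3 * (n + 2) * t ≤ M)
    {B₀ : Set X} (hB₀ : B₀ ∈ 𝓑) (hx : x ∈ B₀)
    (hcount : {B ∈ 𝓑 | 0 < bump M B x}.encard ≤ (n + 1 : ℕ)) :
    ∃ S : Finset (Set X), ↑S ⊆ 𝓑 ∧ S.Nonempty ∧ S.card ≤ n + 1 ∧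
      closedBall x t ⊆ cell M t 𝓑 S := by
  classical
  have hM₀ : 0 < M := lt_of_lt_of_le (by positivity) hM
  have hfin : {B ∈ 𝓑 | 0 < bump M B x}.Finite :=
    Set.finite_of_encard_le_coe hcount
  set P := hfin.toFinset
  have hP : P.card ≤ n + 1 := by
    rw [hfin.encard_eq_coe_toFinset_card] at hcount
    exact_mod_cast hcount
  have hB₀P : B₀ ∈ P := hfin.mem_toFinset.2 ⟨hB₀, by rwa [bump_of_mem hM₀.le hx]⟩
  obtain ⟨a, ha, haM, hgap⟩ := exists_gap_below (s := (P.image (bump M · x)).erase M)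
    (n := n) (by
      have hMmem : M ∈ P.image (bump M · x) :=
        Finset.mem_image.2 ⟨B₀, hB₀P, bump_of_mem hM₀.le hx⟩
      rw [Finset.card_erase_of_mem hMmem]
      exact Nat.sub_le_of_le_add (Finset.card_image_le.trans hP)) M (by positivity : 0 < 3 * t)
  refine ⟨P.filter (a < bump M · x), fun B hB => (hfin.mem_toFinset.1 (Finset.mem_filter.1 hB).1).1,
    ⟨B₀, Finset.mem_filter.2 ⟨hB₀P, by rwa [bump_of_mem hM₀.le hx]⟩⟩,
    (Finset.card_filter_le _ _).trans hP,
    closedBall_subset_cell ht (by nlinarith) (fun B hB => (Finset.mem_filter.1 hB).2) ?_⟩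
  intro B hB hBS
  rcases (bump_nonneg M B x).eq_or_lt with h0 | hpos
  · rw [← h0]; nlinarith
  have hBP : B ∈ P := hfin.mem_toFinset.2 ⟨hB, hpos⟩
  have hle : bump M B x ≤ a := not_lt.1 fun h => hBS (Finset.mem_filter.2 ⟨hBP, h⟩)
  exact hgap _ (Finset.mem_erase.2 ⟨by linarith, Finset.mem_image_of_mem _ hBP⟩) hle

end AdjustedCover

open AdjustedCover in
theorem NagataWith.exists_isAdjustedCover {X : Type*} [PseudoMetricSpace X] {n : ℕ} {C : ℝ}
    (hX : NagataWith X n C) (hC : 0 < C) {t : ℝ} (ht : 0 < t) :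
    ∃ 𝓕 : Fin (n + 1) → Set (Set X), IsAdjustedCover 𝓕 (6 * (C + 1) * (n + 2) * t) t := by
  set M : ℝ := 3 * (n + 2) * t with hM_def
  have hM : 0 < M := by positivity
  obtain ⟨𝓑₀, hcov, hdiam, hmult⟩ := hX (2 * M) (by positivity)
  set 𝓑 : Set (Set X) := {B ∈ 𝓑₀ | B.Nonempty}
  have hcount := encard_bump_pos_le hM.le hmult
  refine ⟨fun k => cellFamily M t 𝓑 k, ⟨?_, ?_, ?_, ?_⟩⟩
  · rintro k _ ⟨S, -, rfl⟩
    exact isOpen_cell M t 𝓑 S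
  · rintro k _ ⟨S, ⟨hS𝓑, hcard⟩, rfl⟩
    obtain ⟨B, hB⟩ : S.Nonempty := Finset.card_pos.1 (by omega)
    calc ediam (cell M t 𝓑 S) ≤ ediam B + 2 * ENNReal.ofReal M :=
          ediam_cell_le hM.le ht.le hB (hS𝓑 hB).2
      _ ≤ ENNReal.ofReal (C * (2 * M)) + 2 * ENNReal.ofReal M := by
          gcongr; exact hdiam B (hS𝓑 hB).1
      _ = ENNReal.ofReal (6 * (C + 1) * (n + 2) * t) := by
          rw [← ENNReal.ofReal_ofNat 2, ← ENNReal.ofReal_mul (by norm_num),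
            ← ENNReal.ofReal_add (by positivity) (by positivity), hM_def]
          ring_nf
  · intro k E hE
    rw [encard_le_one_iff]
    rintro _ _ ⟨⟨S₁, ⟨h₁, hc₁⟩, rfl⟩, x, hx, hxE⟩ ⟨⟨S₂, ⟨h₂, hc₂⟩, rfl⟩, y, hy, hyE⟩
    by_contra hne
    have hsep := lt_dist_of_mem_cell h₁ h₂ (hc₁.trans hc₂.symm) (fun h => hne (h ▸ rfl)) hx hy
    have hxy := (edist_le_ediam_of_mem hxE hyE).trans hE
    rw [edist_dist, ENNReal.ofReal_le_ofReal_iff (by positivity)] at hxy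
    linarith
  · intro x
    obtain ⟨B₀, hB₀, hx⟩ := mem_sUnion.1 (hcov ▸ mem_univ x)
    obtain ⟨S, hS𝓑, hSne, hcard, hball⟩ :=
      exists_closedBall_subset_cell (𝓑 := 𝓑) ht le_rfl ⟨hB₀, x, hx⟩ hx (hcount x)
    have := hSne.card_pos
    exact ⟨⟨S.card - 1, by omega⟩, _, ⟨S, ⟨hS𝓑, by simp only; omega⟩, rfl⟩, hball⟩

/-- Adjusted Lang–Schlichenmaier coverings: if `X` has Nagata dimension at most `n` with
constant `C`, there are constants `c ≥ 1` and `r₀ > 0` depending only on `n` and `C` such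
that for every `r ≥ r₀` there are coverings `𝓑ʲ` (`j ∈ ℤ`) of `X`, each a union of `n + 1`
families `𝓑ʲₖ` of open sets that are `c·rʲ`-bounded and of `rʲ/2`-multiplicity at most `1`,
such that every closed ball of radius `rʲ` is contained in a member of `𝓑ʲ`. -/
theorem exists_adjusted_coverings (n : ℕ) (C : ℝ) (hC : 0 < C) :
    ∃ c : ℝ, 1 ≤ c ∧ ∃ r₀ : ℝ, 0 < r₀ ∧
      ∀ (X : Type) [MetricSpace X], NagataWith X n C →
        ∀ r : ℝ, r₀ ≤ r →
          ∃ 𝓑 : ℤ → Fin (n + 1) → Set (Set X),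
            (∀ (j : ℤ) (k : Fin (n + 1)), ∀ B ∈ 𝓑 j k, IsOpen B) ∧
            (∀ (j : ℤ) (k : Fin (n + 1)), ∀ B ∈ 𝓑 j k,
                EMetric.diam B ≤ ENNReal.ofReal (c * r ^ j)) ∧
            (∀ (j : ℤ) (k : Fin (n + 1)) (E : Set X),
                EMetric.diam E ≤ ENNReal.ofReal (r ^ j / 2) →
                  {B ∈ 𝓑 j k | (B ∩ E).Nonempty}.encard ≤ 1) ∧
            ∀ (j : ℤ) (x : X), ∃ (k : Fin (n + 1)), ∃ B ∈ 𝓑 j k,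
              Metric.closedBall x (r ^ j) ⊆ B := by
  refine ⟨6 * (C + 1) * (n + 2), ?_, 1, one_pos, fun X _ hX r hr => ?_⟩
  · have : (0 : ℝ) ≤ n := n.cast_nonneg
    nlinarith
  choose 𝓑 h𝓑 using fun j : ℤ => hX.exists_isAdjustedCover hC (zpow_pos (one_pos.trans_le hr) j)
  exact ⟨𝓑, fun j => (h𝓑 j).isOpen, fun j => (h𝓑 j).ediam_le, fun j => (h𝓑 j).encard_le_one,
    fun j => (h𝓑 j).exists_closedBall_subset⟩
end

section
/- Let X be a metric space, n ∈ ℕ, r > 0, and j ∈ ℤ. For each k ∈ {0,…,n}, let B^j_k be a family of open subsets of X such that every point of X belongs to at most one member of B^j_k. For B ∈ B^j_k define ψ_B(x) = min{1, r^{-j}·dist(x, X∖B)}, let e_0 = 0 ∈ ℝ^n and let e_1,…,e_n be an orthonormal basis of ℝ^n, and define φ^j : X → ℝ^n by φ^j(x) = Σ_{k=0}^n (Σ_{B ∈ B^j_k} ψ_B(x))·e_k (at each point at most one summand of each inner sum is nonzero). Then |φ^j(x)| ≤ n+1 for all x ∈ X, and φ^j is Lipschitz with constant at most 2(n+1)·r^{-j}.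 -/
open Metric Set
open scoped ENNReal NNReal

/-- `snowPsi t B x = min {1, t * dist(x, X \\ B)}` (with the convention
`dist(x, ∅) = ∞`, so that `snowPsi t univ x = 1`). -/
noncomputable def snowPsi {X : Type*} [PseudoMetricSpace X] (t : ℝ) (B : Set X) (x : X) : ℝ :=
  (min 1 (ENNReal.ofReal t * EMetric.infEdist x Bᶜ)).toReal

/-!
Each `ψ_B = min 1 (t · dist(·, X \ B))` takes values in `[0, 1]`, vanishes off `B`, and is
`t`-Lipschitz because `dist(·, X \ B)` is `1`-Lipschitz. At every point at most one term of an
inner sum `∑_{B ∈ 𝓑ₖ} ψ_B` is nonzero, so the inner sum is again `[0, 1]`-valued and `t`-Lipschitz: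
to bound its increment from `y` to `x`, compare both values with the single `ψ_B` that may be
nonzero at `x`.
Summing `n + 1` such coefficients against vectors of norm at most `1` gives both estimates.
-/

open Function

section TsumSubsingletonSupport

variable {ι : Type*}

lemma tsum_eq_zero_or_exists_of_support_subsingleton {α : Type*} [AddCommMonoid α]
    [TopologicalSpace α] {g : ι → α} (h : (support g).Subsingleton) :
    ∑' i, g i = 0 ∨ ∃ i, ∑' i, g i = g i := by
  obtain h | ⟨i, hi⟩ := h.eq_empty_or_singleton
  · exact .inl (by simp [support_eq_empty_iff.1 h])
  · exact .inr ⟨i, tsum_eq_single i fun j hj => notMem_support.1 (by simpa [hi] using hj)⟩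

lemma tsum_le_of_support_subsingleton {g : ι → ℝ} {c : ℝ} (h : (support g).Subsingleton)
    (hc : 0 ≤ c) (hg : ∀ i, g i ≤ c) : ∑' i, g i ≤ c := by
  obtain h0 | ⟨i, hi⟩ := tsum_eq_zero_or_exists_of_support_subsingleton h
  · exact h0 ▸ hc
  · exact hi ▸ hg i

lemma lipschitzWith_tsum_of_support_subsingleton {X : Type*} [PseudoMetricSpace X]
    {f : ι → X → ℝ} {K : ℝ≥0} (hsupp : ∀ x, (support fun i => f i x).Subsingleton)
    (hf0 : ∀ i x, 0 ≤ f i x) (hf : ∀ i, LipschitzWith K (f i)) :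
    LipschitzWith K fun x => ∑' i, f i x := by
  refine LipschitzWith.of_le_add_mul K fun x y => ?_
  obtain hx | ⟨i, hx⟩ := tsum_eq_zero_or_exists_of_support_subsingleton (hsupp x)
  · rw [hx]
    exact add_nonneg (tsum_nonneg fun i => hf0 i y) (by positivity)
  · have hiy : f i y ≤ ∑' i, f i y :=
      (summable_of_hasFiniteSupport (hsupp y).finite).le_tsum i fun j _ => hf0 j y
    linarith [(hf i).le_add_mul x y]

end TsumSubsingletonSupport

lemma norm_sum_smul_le {ι E : Type*} [Fintype ι] [SeminormedAddCommGroup E] [NormedSpace ℝ E]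
    {c : ι → ℝ} {e : ι → E} {M : ℝ} (hc : ∀ i, ‖c i‖ ≤ M) (he : ∀ i, ‖e i‖ ≤ 1) :
    ‖∑ i, c i • e i‖ ≤ Fintype.card ι * M :=
  calc ‖∑ i, c i • e i‖ ≤ ∑ i, ‖c i • e i‖ := norm_sum_le _ _
    _ ≤ ∑ _i : ι, M := by
      gcongr with i
      rw [norm_smul]
      exact (mul_le_of_le_one_right (norm_nonneg _) (he i)).trans (hc i)
    _ = Fintype.card ι * M := by simp

lemma LipschitzWith.sum_smul {ι X E : Type*} [Fintype ι] [PseudoMetricSpace X]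
    [SeminormedAddCommGroup E] [NormedSpace ℝ E] {g : ι → X → ℝ} {e : ι → E} {K : ℝ≥0}
    (hg : ∀ i, LipschitzWith K (g i)) (he : ∀ i, ‖e i‖ ≤ 1) :
    LipschitzWith (Fintype.card ι * K) fun x => ∑ i, g i x • e i := by
  refine LipschitzWith.of_dist_le_mul fun x y => ?_
  rw [dist_eq_norm, ← Finset.sum_sub_distrib]
  simp_rw [← sub_smul]
  push_cast
  rw [mul_assoc]
  exact norm_sum_smul_le (fun i => (hg i).dist_le_mul x y) he

section snowPsi

variable {X : Type*} [PseudoMetricSpace X]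

lemma snowPsi_def (t : ℝ) (B : Set X) (x : X) :
    snowPsi t B x = (min 1 (ENNReal.ofReal t * infEDist x Bᶜ)).toReal :=
  rfl

lemma snowPsi_nonneg (t : ℝ) (B : Set X) (x : X) : 0 ≤ snowPsi t B x :=
  ENNReal.toReal_nonneg

lemma snowPsi_le_one (t : ℝ) (B : Set X) (x : X) : snowPsi t B x ≤ 1 :=
  ENNReal.toReal_le_of_le_ofReal zero_le_one (by simp)

lemma support_snowPsi_subset (t : ℝ) (B : Set X) : support (snowPsi t B) ⊆ B := by
  intro x hx
  by_contra hxB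
  exact hx (by simp [snowPsi_def, infEDist_zero_of_mem (show x ∈ Bᶜ from hxB)])

lemma lipschitzWith_snowPsi (t : ℝ) (B : Set X) : LipschitzWith t.toNNReal (snowPsi t B) := by
  refine LipschitzWith.of_le_add_mul _ fun x y => ?_
  set K : ℝ≥0∞ := ENNReal.ofReal t
  have key : min 1 (K * infEDist x Bᶜ) ≤ min 1 (K * infEDist y Bᶜ) + K * edist x y :=
    calc min 1 (K * infEDist x Bᶜ) ≤ min 1 (K * infEDist y Bᶜ + K * edist x y) := by
          rw [← mul_add]
          gcongr
          exact infEDist_le_infEDist_add_edist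
      _ ≤ min 1 (K * infEDist y Bᶜ) + K * edist x y := by
          rw [← min_add_add_right]
          exact min_le_min le_self_add le_rfl
  have := ENNReal.toReal_le_add key (ne_top_of_le_ne_top ENNReal.one_ne_top (min_le_left _ _))
    (by finiteness)
  simpa [snowPsi_def, K, edist_dist, ENNReal.toReal_ofReal'] using this

lemma support_snowPsi_subsingleton (t : ℝ) {𝓑 : Set (Set X)} {x : X}
    (h𝓑 : {B ∈ 𝓑 | x ∈ B}.Subsingleton) :
    (support fun B : 𝓑 => snowPsi t B x).Subsingleton := fun B₁ h₁ B₂ h₂ =>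
  Subtype.ext (h𝓑 ⟨B₁.2, support_snowPsi_subset t _ h₁⟩ ⟨B₂.2, support_snowPsi_subset t _ h₂⟩)

end snowPsi

theorem phi_basic_properties_general {X : Type*} [MetricSpace X] (n : ℕ) (r : ℝ) (j : ℤ)
    (𝓑 : Fin (n + 1) → Set (Set X))
    (hdisj : ∀ (k : Fin (n + 1)) (x : X), {B ∈ 𝓑 k | x ∈ B}.Subsingleton)
    (e : Fin (n + 1) → EuclideanSpace ℝ (Fin n)) (he0 : e 0 = 0)
    (b : OrthonormalBasis (Fin n) ℝ (EuclideanSpace ℝ (Fin n)))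
    (heb : ∀ i : Fin n, e i.succ = b i)
    (φ : X → EuclideanSpace ℝ (Fin n))
    (hφ : ∀ x, φ x = ∑ k : Fin (n + 1),
        (∑' B : 𝓑 k, snowPsi (r ^ (-j)) (B : Set X) x) • e k) :
    (∀ x : X, ‖φ x‖ ≤ n + 1) ∧
      LipschitzWith (Real.toNNReal (2 * (n + 1) * r ^ (-j))) φ := by
  set t := r ^ (-j)
  have hsupp k x := support_snowPsi_subsingleton t (hdisj k x)
  have he k : ‖e k‖ ≤ 1 := by
    induction k using Fin.cases with
    | zero => simp [he0]
    | succ i => exact (heb i ▸ b.orthonormal.1 i).le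
  refine ⟨fun x => ?_, ?_⟩
  · rw [hφ x]
    refine (norm_sum_smul_le (M := 1) (fun k => ?_) he).trans (by simp)
    rw [Real.norm_of_nonneg (tsum_nonneg fun B => snowPsi_nonneg t _ x)]
    exact tsum_le_of_support_subsingleton (hsupp k x) zero_le_one fun B => snowPsi_le_one t _ x
  · have hlip := LipschitzWith.sum_smul (fun k => lipschitzWith_tsum_of_support_subsingleton
      (hsupp k) (fun B => snowPsi_nonneg t (B : Set X))
      (fun B => lipschitzWith_snowPsi t (B : Set X))) he
    obtain rfl : φ = fun x => ∑ k, (∑' B : 𝓑 k, snowPsi t (B : Set X) x) • e k := funext hφ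
    refine hlip.weaken ?_
    rw [Real.toNNReal_mul (by positivity), Fintype.card_fin]
    gcongr
    rw [Real.le_toNNReal_iff_coe_le (by positivity)]
    push_cast
    linarith

/-- Properties of `φʲ(x) = ∑ₖ (∑_{B ∈ 𝓑ₖ} ψ_B(x)) • eₖ`, where `e₀ = 0`, `e₁, …, eₙ` is an
orthonormal basis of `ℝⁿ`, every point lies in at most one member of each family `𝓑ₖ`, and
`ψ_B(x) = min {1, r⁻ʲ · dist(x, X \\ B)}`: then `‖φʲ(x)‖ ≤ n + 1` and `φʲ` is Lipschitz
with constant at most `2(n+1) r⁻ʲ`. -/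
theorem phi_basic_properties {X : Type*} [MetricSpace X] (n : ℕ) (r : ℝ) (hr : 0 < r) (j : ℤ)
    (𝓑 : Fin (n + 1) → Set (Set X))
    (hopen : ∀ k, ∀ B ∈ 𝓑 k, IsOpen B)
    (hdisj : ∀ (k : Fin (n + 1)) (x : X), {B ∈ 𝓑 k | x ∈ B}.Subsingleton)
    (e : Fin (n + 1) → EuclideanSpace ℝ (Fin n)) (he0 : e 0 = 0)
    (b : OrthonormalBasis (Fin n) ℝ (EuclideanSpace ℝ (Fin n)))
    (heb : ∀ i : Fin n, e i.succ = b i)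
    (φ : X → EuclideanSpace ℝ (Fin n))
    (hφ : ∀ x, φ x = ∑ k : Fin (n + 1),
        (∑' B : 𝓑 k, snowPsi (r ^ (-j)) (B : Set X) x) • e k) :
    (∀ x : X, ‖φ x‖ ≤ n + 1) ∧
      LipschitzWith (Real.toNNReal (2 * (n + 1) * r ^ (-j))) φ :=
  phi_basic_properties_general n r j 𝓑 hdisj e he0 b heb φ hφ
end

section
/- Let (X,d) be a metric space, n ∈ ℕ, r > 1, ε ∈ (0,1), and x₀ ∈ X. For each j ∈ ℤ, let φ^j : X → ℝ^n satisfy |φ^j(x)| ≤ n+1 for all x ∈ X and be Lipschitz with constant at most 2(n+1)·r^{-j}. Then for every x ∈ X the series f(x) = Σ_{j∈ℤ} r^{jε}·(φ^j(x) − φ^j(x₀)) converges absolutely, and the resulting map f : (X,d^ε) → ℝ^n is Lipschitz, with Lipschitz constant bounded above by a quantity depending only on r, n, and ε. -/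
/-! Writing `d = dist x y`, the `j`-th term is at most `2(n+1) r^{jε} min(1, d r^{-j})`: the
first bound comes from `|φʲ| ≤ n + 1`, the second from the Lipschitz condition. The series
`S(d) = ∑ⱼ r^{jε} min(1, d r^{-j})` is monotone in `d` and satisfies `S(r^k d) = r^{kε} S(d)`
(shift `j` by `k`), so taking `r^{k-1} ≤ d ≤ r^k` gives `S(d) ≤ r^ε S(1) d^ε`. -/

open scoped NNReal

noncomputable def snowflakeTerm (r ε d : ℝ) (j : ℤ) : ℝ :=
  r ^ ((j : ℝ) * ε) * min 1 (d * r ^ (-(j : ℝ)))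

section SnowflakeTerm

variable {r ε d : ℝ}

lemma snowflakeTerm_nonneg (hr : 0 ≤ r) (hd : 0 ≤ d) (j : ℤ) : 0 ≤ snowflakeTerm r ε d j := by
  unfold snowflakeTerm; positivity

lemma summable_snowflakeTerm (hr : 1 < r) (hε0 : 0 < ε) (hε1 : ε < 1) (hd : 0 ≤ d) :
    Summable (snowflakeTerm r ε d) := by
  have hr0 : 0 < r := one_pos.trans hr
  apply Summable.of_nat_of_neg
  · refine Summable.of_nonneg_of_le (fun n => snowflakeTerm_nonneg hr0.le hd _) (fun n => ?_)
      ((summable_geometric_of_lt_one (by positivity)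
        (Real.rpow_lt_one_of_one_lt_of_neg hr (by linarith : ε - 1 < 0))).mul_left d)
    calc snowflakeTerm r ε d n ≤ r ^ ((n : ℝ) * ε) * (d * r ^ (-(n : ℝ))) :=
          mul_le_mul_of_nonneg_left (min_le_right _ _) (by positivity)
      _ = d * (r ^ (ε - 1)) ^ n := by
          rw [← Real.rpow_natCast, ← Real.rpow_mul hr0.le, mul_left_comm, ← Real.rpow_add hr0]
          ring_nf
  · refine Summable.of_nonneg_of_le (fun n => snowflakeTerm_nonneg hr0.le hd _) (fun n => ?_)
      (summable_geometric_of_lt_one (by positivity)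
        (Real.rpow_lt_one_of_one_lt_of_neg hr (by linarith : -ε < 0)))
    calc snowflakeTerm r ε d (-n) ≤ r ^ (((-n : ℤ) : ℝ) * ε) * 1 :=
          mul_le_mul_of_nonneg_left (min_le_left _ _) (by positivity)
      _ = (r ^ (-ε)) ^ n := by
          rw [← Real.rpow_natCast, ← Real.rpow_mul hr0.le]
          push_cast; ring_nf

lemma snowflakeTerm_rpow_intCast_mul_add (hr : 0 < r) (k j : ℤ) :
    snowflakeTerm r ε (r ^ (k : ℝ) * d) (j + k) = r ^ ((k : ℝ) * ε) * snowflakeTerm r ε d j := by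
  have hscale : r ^ (k : ℝ) * d * r ^ (-((j + k : ℤ) : ℝ)) = d * r ^ (-(j : ℝ)) := by
    rw [mul_comm _ d, mul_assoc, ← Real.rpow_add hr]; push_cast; ring_nf
  rw [snowflakeTerm, snowflakeTerm, hscale, ← mul_assoc, ← Real.rpow_add hr]
  push_cast; ring_nf

lemma tsum_snowflakeTerm_rpow_intCast_mul (hr : 0 < r) (k : ℤ) :
    ∑' j, snowflakeTerm r ε (r ^ (k : ℝ) * d) j =
      r ^ ((k : ℝ) * ε) * ∑' j, snowflakeTerm r ε d j := by
  rw [← (Equiv.addRight k).tsum_eq, ← tsum_mul_left]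
  exact tsum_congr (snowflakeTerm_rpow_intCast_mul_add hr k)

lemma tsum_snowflakeTerm_mono (hr : 1 < r) (hε0 : 0 < ε) (hε1 : ε < 1) {d' : ℝ} (hd : 0 ≤ d)
    (hdd' : d ≤ d') :
    ∑' j, snowflakeTerm r ε d j ≤ ∑' j, snowflakeTerm r ε d' j := by
  refine Summable.tsum_le_tsum (fun j => ?_) (summable_snowflakeTerm hr hε0 hε1 hd)
    (summable_snowflakeTerm hr hε0 hε1 (hd.trans hdd'))
  unfold snowflakeTerm
  gcongr

lemma tsum_snowflakeTerm_le (hr : 1 < r) (hε0 : 0 < ε) (hε1 : ε < 1) (hd : 0 ≤ d) :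
    ∑' j, snowflakeTerm r ε d j ≤ r ^ ε * (∑' j, snowflakeTerm r ε 1 j) * d ^ ε := by
  have hr0 : 0 < r := one_pos.trans hr
  rcases hd.eq_or_lt with rfl | hd
  · simp [snowflakeTerm, Real.zero_rpow hε0.ne']
  set k : ℤ := ⌊Real.logb r d⌋ + 1
  have hd_le : d ≤ r ^ (k : ℝ) * 1 := by
    rw [mul_one]
    calc d = r ^ Real.logb r d := (Real.rpow_logb hr0 hr.ne' hd).symm
      _ ≤ r ^ (k : ℝ) := Real.rpow_le_rpow_of_exponent_le hr.le
          (by push_cast [k]; exact (Int.lt_floor_add_one _).le)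
  have hk_le : r ^ ((k : ℝ) * ε) ≤ r ^ ε * d ^ ε := by
    have hfloor : r ^ ((k : ℝ) - 1) ≤ d := by
      calc r ^ ((k : ℝ) - 1) ≤ r ^ Real.logb r d :=
            Real.rpow_le_rpow_of_exponent_le hr.le (by push_cast [k]; simpa using Int.floor_le _)
        _ = d := Real.rpow_logb hr0 hr.ne' hd
    calc r ^ ((k : ℝ) * ε) = r ^ ε * (r ^ ((k : ℝ) - 1)) ^ ε := by
          rw [← Real.rpow_mul hr0.le, ← Real.rpow_add hr0]; ring_nf
      _ ≤ r ^ ε * d ^ ε := by gcongr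
  calc ∑' j, snowflakeTerm r ε d j ≤ ∑' j, snowflakeTerm r ε (r ^ (k : ℝ) * 1) j :=
        tsum_snowflakeTerm_mono hr hε0 hε1 hd.le hd_le
    _ = r ^ ((k : ℝ) * ε) * ∑' j, snowflakeTerm r ε 1 j := tsum_snowflakeTerm_rpow_intCast_mul hr0 k
    _ ≤ r ^ ε * d ^ ε * ∑' j, snowflakeTerm r ε 1 j := by
        gcongr
        exact tsum_nonneg (snowflakeTerm_nonneg hr0.le zero_le_one)
    _ = _ := by ring

lemma tsum_snowflakeTerm_one_pos (hr : 1 < r) (hε0 : 0 < ε) (hε1 : ε < 1) :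
    0 < ∑' j, snowflakeTerm r ε 1 j :=
  (summable_snowflakeTerm hr hε0 hε1 zero_le_one).tsum_pos
    (snowflakeTerm_nonneg (one_pos.trans hr).le zero_le_one) 0 (by simp [snowflakeTerm])

end SnowflakeTerm

lemma norm_sub_le_min_of_lipschitzWith {X E : Type*} [PseudoMetricSpace X]
    [SeminormedAddCommGroup E] {f : X → E} {M : ℝ} {K : ℝ≥0} (hM : ∀ x, ‖f x‖ ≤ M)
    (hf : LipschitzWith K f) (x y : X) : ‖f x - f y‖ ≤ min (2 * M) (K * dist x y) := by
  refine le_min ?_ ?_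
  · linarith [norm_sub_le (f x) (f y), hM x, hM y]
  · rw [← dist_eq_norm]; exact hf.dist_le_mul x y

section Bumps

variable {X E : Type*} [PseudoMetricSpace X] [SeminormedAddCommGroup E] [NormedSpace ℝ E]
  {r ε M : ℝ} {φ : ℤ → X → E}

lemma norm_smul_sub_le_snowflakeTerm (hr : 0 < r) (hM : ∀ j x, ‖φ j x‖ ≤ M)
    (hφ : ∀ j : ℤ, LipschitzWith (Real.toNNReal (2 * M * r ^ (-j))) (φ j)) (x y : X) (j : ℤ) :
    ‖r ^ ((j : ℝ) * ε) • (φ j x - φ j y)‖ ≤ 2 * M * snowflakeTerm r ε (dist x y) j := by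
  have hM0 : 0 ≤ M := (norm_nonneg _).trans (hM 0 x)
  have hlip : ‖φ j x - φ j y‖ ≤ 2 * M * min 1 (dist x y * r ^ (-(j : ℝ))) := by
    calc ‖φ j x - φ j y‖ ≤ min (2 * M) (2 * M * r ^ (-j) * dist x y) := by
          simpa only [Real.coe_toNNReal _ (by positivity : 0 ≤ 2 * M * r ^ (-j))]
            using norm_sub_le_min_of_lipschitzWith (hM j) (hφ j) x y
      _ = 2 * M * min 1 (dist x y * r ^ (-(j : ℝ))) := by
          rw [mul_min_of_nonneg _ _ (by positivity), mul_one, ← Real.rpow_intCast]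
          push_cast; ring_nf
  rw [norm_smul, Real.norm_of_nonneg (by positivity), snowflakeTerm]
  calc r ^ ((j : ℝ) * ε) * ‖φ j x - φ j y‖
      ≤ r ^ ((j : ℝ) * ε) * (2 * M * min 1 (dist x y * r ^ (-(j : ℝ)))) := by gcongr
    _ = _ := by ring

lemma summable_norm_smul_sub_and_tsum_le (hr : 1 < r) (hε0 : 0 < ε) (hε1 : ε < 1)
    (hM : ∀ j x, ‖φ j x‖ ≤ M)
    (hφ : ∀ j : ℤ, LipschitzWith (Real.toNNReal (2 * M * r ^ (-j))) (φ j)) (x y : X) :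
    Summable (fun j : ℤ => ‖r ^ ((j : ℝ) * ε) • (φ j x - φ j y)‖) ∧
      ∑' j : ℤ, ‖r ^ ((j : ℝ) * ε) • (φ j x - φ j y)‖
        ≤ 2 * M * r ^ ε * (∑' j, snowflakeTerm r ε 1 j) * dist x y ^ ε := by
  have hbound := norm_smul_sub_le_snowflakeTerm (ε := ε) (one_pos.trans hr) hM hφ x y
  have hsum := (summable_snowflakeTerm hr hε0 hε1 (dist_nonneg (x := x) (y := y))).mul_left (2 * M)
  have hM0 : 0 ≤ M := (norm_nonneg _).trans (hM 0 x)
  refine ⟨hsum.of_nonneg_of_le (fun _ => norm_nonneg _) hbound, ?_⟩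
  calc ∑' j : ℤ, ‖r ^ ((j : ℝ) * ε) • (φ j x - φ j y)‖
      ≤ ∑' j, 2 * M * snowflakeTerm r ε (dist x y) j :=
        Summable.tsum_le_tsum hbound (hsum.of_nonneg_of_le (fun _ => norm_nonneg _) hbound) hsum
    _ = 2 * M * ∑' j, snowflakeTerm r ε (dist x y) j := tsum_mul_left
    _ ≤ 2 * M * (r ^ ε * (∑' j, snowflakeTerm r ε 1 j) * dist x y ^ ε) := by
        gcongr; exact tsum_snowflakeTerm_le hr hε0 hε1 dist_nonneg
    _ = _ := by ring

end Bumps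

/-- If each `φʲ : X → ℝⁿ` is bounded by `n + 1` and Lipschitz with constant at most
`2(n+1) r⁻ʲ`, then `f(x) = ∑_{j∈ℤ} r^{jε} (φʲ(x) - φʲ(x₀))` converges absolutely and
defines a Lipschitz map from the snowflake `(X, d^ε)` to `ℝⁿ`, with Lipschitz constant
depending only on `r`, `n` and `ε`. -/
theorem sum_of_bumps_lipschitz (n : ℕ) (r : ℝ) (hr : 1 < r) (ε : ℝ) (hε0 : 0 < ε)
    (hε1 : ε < 1) :
    ∃ L : ℝ, 0 < L ∧
      ∀ (X : Type) [MetricSpace X], ∀ φ : ℤ → X → EuclideanSpace ℝ (Fin n),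
        (∀ (j : ℤ) (x : X), ‖φ j x‖ ≤ n + 1) →
        (∀ j : ℤ, LipschitzWith (Real.toNNReal (2 * (n + 1) * r ^ (-j))) (φ j)) →
        ∀ x₀ : X,
          (∀ x : X, Summable (fun j : ℤ => ‖(r ^ ((j : ℝ) * ε)) • (φ j x - φ j x₀)‖)) ∧
          ∀ x y : X,
            ‖(∑' j : ℤ, (r ^ ((j : ℝ) * ε)) • (φ j x - φ j x₀))
                - (∑' j : ℤ, (r ^ ((j : ℝ) * ε)) • (φ j y - φ j x₀))‖
              ≤ L * dist x y ^ ε := by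
  have hr0 : 0 < r := one_pos.trans hr
  have hS := tsum_snowflakeTerm_one_pos hr hε0 hε1
  refine ⟨2 * (n + 1) * r ^ ε * ∑' j, snowflakeTerm r ε 1 j, by positivity, ?_⟩
  intro X _ φ hM hφ x₀
  have key := summable_norm_smul_sub_and_tsum_le hr hε0 hε1 hM hφ
  refine ⟨fun x => (key x x₀).1, fun x y => ?_⟩
  rw [← (key x x₀).1.of_norm.tsum_sub (key y x₀).1.of_norm]
  calc ‖∑' j : ℤ, (r ^ ((j : ℝ) * ε) • (φ j x - φ j x₀) - r ^ ((j : ℝ) * ε) • (φ j y - φ j x₀))‖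
      = ‖∑' j : ℤ, r ^ ((j : ℝ) * ε) • (φ j x - φ j y)‖ := by
        simp only [← smul_sub, sub_sub_sub_cancel_right]
    _ ≤ ∑' j : ℤ, ‖r ^ ((j : ℝ) * ε) • (φ j x - φ j y)‖ := norm_tsum_le_tsum_norm (key x y).1
    _ ≤ _ := (key x y).2
end

section
/- Let X be a compact, bounded turning metric space, Y a metric space, and f : X → Y a continuous map. Then for all x, y ∈ X, the infimum defining the pullback distance d_f(x,y) is achieved: there exists a continuum K ⊆ X containing x and y with diam(f(K)) = d_f(x,y). -/
open Metric Set TopologicalSpace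
open scoped ENNReal NNReal

/-!
The continua through `x` and `y` form a closed, hence compact, subset of the hyperspace of
nonempty compact subsets of `X` with its Vietoris (= Hausdorff metric) topology, and
`K ↦ diam (f '' K)` is continuous there, being `diam` (which is `2`-Lipschitz for the Hausdorff
distance) composed with the continuous map `K ↦ f '' K`. So it attains its infimum.
-/

/-- A continuum: a nonempty compact connected set. -/
def IsContinuum {X : Type*} [TopologicalSpace X] (K : Set X) : Prop :=
  IsCompact K ∧ IsConnected K

/-- `X` is `C`-bounded turning: every pair of points lies in a continuum of
diameter at most `C` times their distance. -/
def BoundedTurningWith (X : Type*) [PseudoMetricSpace X] (C : ℝ) : Prop :=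
  ∀ x y : X, ∃ K : Set X, IsContinuum K ∧ x ∈ K ∧ y ∈ K ∧ Metric.diam K ≤ C * dist x y

/-- The Guo–Williams pullback distance associated to `f`:
`d_f(x,y) = inf {diam (f '' K) : K a continuum containing x and y}`. -/
noncomputable def pullbackDist {X Y : Type*} [TopologicalSpace X] [PseudoMetricSpace Y]
    (f : X → Y) (x y : X) : ℝ :=
  sInf {t : ℝ | ∃ K : Set X, IsContinuum K ∧ x ∈ K ∧ y ∈ K ∧ t = Metric.diam (f '' K)}

theorem IsCompact.exists_isOpen_disjoint_of_not_isPreconnected {α : Type*} [TopologicalSpace α]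
    [T2Space α] {K : Set α} (hK : IsCompact K) (h : ¬IsPreconnected K) :
    ∃ u v : Set α, IsOpen u ∧ IsOpen v ∧ Disjoint u v ∧ K ⊆ u ∪ v ∧
      (K ∩ u).Nonempty ∧ (K ∩ v).Nonempty := by
  simp only [isPreconnected_iff_subset_of_fully_disjoint_closed hK.isClosed, not_forall,
    not_or, not_subset] at h
  obtain ⟨a, b, ha, hb, hKab, hab, ⟨p, hpK, hpb⟩, ⟨q, hqK, hqa⟩⟩ := h
  obtain ⟨u, v, hu, hv, hau, hbv, huv⟩ :=
    SeparatedNhds.of_isCompact_isCompact (hK.inter_right ha) (hK.inter_right hb)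
      (hab.mono inter_subset_right inter_subset_right)
  refine ⟨u, v, hu, hv, huv, fun z hz => ?_, ⟨q, hqK, ?_⟩, ⟨p, hpK, ?_⟩⟩
  · exact (hKab hz).imp (fun hza => hau ⟨hz, hza⟩) (fun hzb => hbv ⟨hz, hzb⟩)
  · exact hau ⟨hqK, (hKab hqK).resolve_right hqa⟩
  · exact hbv ⟨hpK, (hKab hpK).resolve_left hpb⟩

namespace TopologicalSpace.NonemptyCompacts

variable {α : Type*}

theorem isClosed_setOf_isPreconnected [TopologicalSpace α] [T2Space α] :
    IsClosed {K : NonemptyCompacts α | IsPreconnected (K : Set α)} := by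
  -- Disjoint open sets separating `K` separate every compact set in a Vietoris neighbourhood of `K`.
  rw [← isOpen_compl_iff, isOpen_iff_forall_mem_open]
  intro K hK
  obtain ⟨u, v, hu, hv, huv, hKuv, hKu, hKv⟩ :=
    K.isCompact.exists_isOpen_disjoint_of_not_isPreconnected hK
  refine ⟨{L : NonemptyCompacts α | (L : Set α) ⊆ u ∪ v} ∩ {L | ((L : Set α) ∩ u).Nonempty} ∩
    {L | ((L : Set α) ∩ v).Nonempty}, ?_,
    ((isOpen_subsets_of_isOpen (hu.union hv)).inter (isOpen_inter_nonempty_of_isOpen hu)).inter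
      (isOpen_inter_nonempty_of_isOpen hv), ⟨hKuv, hKu⟩, hKv⟩
  rintro L ⟨⟨hLuv, hLu⟩, hLv⟩ hL
  obtain ⟨z, -, hzu, hzv⟩ := hL u v hu hv hLuv hLu hLv
  exact disjoint_left.1 huv hzu hzv

theorem isClosed_setOf_mem [TopologicalSpace α] [T1Space α] (x : α) :
    IsClosed {K : NonemptyCompacts α | x ∈ (K : Set α)} := by
  simpa only [inter_singleton_nonempty] using
    isClosed_inter_nonempty_of_isClosed (isClosed_singleton (x := x))

theorem lipschitzWith_diam [MetricSpace α] :
    LipschitzWith 2 fun K : NonemptyCompacts α => diam (K : Set α) := by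
  refine LipschitzWith.of_le_add_mul 2 fun s t => diam_le_of_forall_dist_le (by positivity)
    fun p hp q hq => ?_
  have hfin : hausdorffEDist (s : Set α) t ≠ ⊤ := hausdorffEDist_ne_top_of_nonempty_of_bounded
    s.nonempty t.nonempty s.isCompact.isBounded t.isCompact.isBounded
  have hp_near := infDist_le_hausdorffDist_of_mem hp hfin
  have hq_near := infDist_le_hausdorffDist_of_mem hq hfin
  obtain ⟨q', hq't, hqq'⟩ := t.isCompact.exists_infDist_eq_dist t.nonempty q
  calc dist p q ≤ dist p q' + dist q' q := dist_triangle _ _ _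
    _ ≤ (infDist p t + diam (t : Set α)) + infDist q t := by
      rw [dist_comm q', ← hqq']
      gcongr
      exact dist_le_infDist_add_diam t.isCompact.isBounded hq't
    _ ≤ diam (t : Set α) + (2 : ℝ≥0) * dist s t := by
      rw [Metric.NonemptyCompacts.dist_eq]; push_cast; linarith

theorem isCompact_setOf_isPreconnected_mem_mem [TopologicalSpace α] [CompactSpace α] [T2Space α]
    (x y : α) : IsCompact {K : NonemptyCompacts α |
      IsPreconnected (K : Set α) ∧ x ∈ (K : Set α) ∧ y ∈ (K : Set α)} :=
  (isClosed_setOf_isPreconnected.inter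
    ((isClosed_setOf_mem x).inter (isClosed_setOf_mem y))).isCompact

end TopologicalSpace.NonemptyCompacts

section pullbackDist

variable {X Y : Type*} [TopologicalSpace X] [PseudoMetricSpace Y] {f : X → Y} {x y : X}

theorem pullbackDist_le_diam_image {K : Set X} (hK : IsContinuum K) (hx : x ∈ K) (hy : y ∈ K) :
    pullbackDist f x y ≤ diam (f '' K) :=
  csInf_le ⟨0, by rintro _ ⟨L, -, -, -, rfl⟩; exact diam_nonneg⟩ ⟨K, hK, hx, hy, rfl⟩

theorem le_pullbackDist {t : ℝ} (hne : ∃ K : Set X, IsContinuum K ∧ x ∈ K ∧ y ∈ K)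
    (h : ∀ K : Set X, IsContinuum K → x ∈ K → y ∈ K → t ≤ diam (f '' K)) :
    t ≤ pullbackDist f x y := by
  obtain ⟨K, hK, hx, hy⟩ := hne
  exact le_csInf ⟨_, K, hK, hx, hy, rfl⟩ (by rintro _ ⟨L, hL, hxL, hyL, rfl⟩; exact h L hL hxL hyL)

end pullbackDist

theorem pullbackDist_achieved_general {X Y : Type*} [MetricSpace X] [CompactSpace X] [MetricSpace Y]
    (C : ℝ) (hbt : BoundedTurningWith X C)
    (f : X → Y) (hf : Continuous f) (x y : X) :
    ∃ K : Set X, IsContinuum K ∧ x ∈ K ∧ y ∈ K ∧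
      Metric.diam (f '' K) = pullbackDist f x y := by
  have hdiam : Continuous fun K : NonemptyCompacts X => diam (f '' (K : Set X)) :=
    NonemptyCompacts.lipschitzWith_diam.continuous.comp hf.nonemptyCompacts_map
  obtain ⟨K₀, hK₀, hxK₀, hyK₀, -⟩ := hbt x y
  obtain ⟨K, ⟨hK, hxK, hyK⟩, hmin⟩ :=
    (NonemptyCompacts.isCompact_setOf_isPreconnected_mem_mem x y).exists_isMinOn
      ⟨⟨⟨K₀, hK₀.1⟩, hK₀.2.nonempty⟩, hK₀.2.isPreconnected, hxK₀, hyK₀⟩ hdiam.continuousOn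
  have hKc : IsContinuum (K : Set X) := ⟨K.isCompact, K.nonempty, hK⟩
  refine ⟨K, hKc, hxK, hyK, le_antisymm ?_ (pullbackDist_le_diam_image hKc hxK hyK)⟩
  refine le_pullbackDist ⟨K₀, hK₀, hxK₀, hyK₀⟩ fun L hL hxL hyL => ?_
  exact hmin (a := ⟨⟨L, hL.1⟩, hL.2.nonempty⟩) ⟨hL.2.isPreconnected, hxL, hyL⟩

/-- For a compact bounded turning space and a continuous map, the infimum defining the
pullback distance is achieved by some continuum. -/
theorem pullbackDist_achieved {X Y : Type*} [MetricSpace X] [CompactSpace X] [MetricSpace Y]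
    (C : ℝ) (hC : 1 ≤ C) (hbt : BoundedTurningWith X C)
    (f : X → Y) (hf : Continuous f) (x y : X) :
    ∃ K : Set X, IsContinuum K ∧ x ∈ K ∧ y ∈ K ∧
      Metric.diam (f '' K) = pullbackDist f x y :=
  pullbackDist_achieved_general C hbt f hf x y
end

section
/- Let X be a bounded turning metric space and f : X → Y a non-constant branched quasisymmetry. Then f does not collapse any non-trivial continuum: for every non-trivial continuum E ⊆ X, diam(f(E)) > 0. -/
open Metric Set
open scoped ENNReal NNReal

/-- `η` is a (necessarily increasing) homeomorphism of `[0,∞)` onto itself. -/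
def IsQSControl (η : ℝ → ℝ) : Prop :=
  ContinuousOn η (Set.Ici 0) ∧ StrictMonoOn η (Set.Ici 0) ∧
    Set.MapsTo η (Set.Ici 0) (Set.Ici 0) ∧ Set.SurjOn η (Set.Ici 0) (Set.Ici 0)

/-- `f` is a branched quasisymmetry with control homeomorphism `η`:
`f` is continuous and distorts ratios of diameters of intersecting
non-trivial continua in a manner controlled by `η`. -/
def BranchedQS {X Y : Type*} [PseudoMetricSpace X] [PseudoMetricSpace Y]
    (η : ℝ → ℝ) (f : X → Y) : Prop :=
  Continuous f ∧ IsQSControl η ∧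
    ∀ E E' : Set X, IsContinuum E → IsContinuum E' → E.Nontrivial → E'.Nontrivial →
      (E ∩ E').Nonempty →
        Metric.diam (f '' E) ≤ η (Metric.diam E / Metric.diam E') * Metric.diam (f '' E')

/-! If `f` collapsed a non-trivial continuum `E`, the quasisymmetry inequality with `E' = E` would
make `f` collapse every non-trivial continuum meeting `E`. In a bounded turning space every point
lies in a continuum together with a point of `E`, so `f` would be constant. -/

namespace BranchedQS

variable {X Y : Type*} [PseudoMetricSpace X] [MetricSpace Y] {η : ℝ → ℝ} {f : X → Y}

theorem image_subsingleton_of_inter_nonempty (hf : BranchedQS η f) {E K : Set X}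
    (hE : IsContinuum E) (hEnt : E.Nontrivial) (hK : IsContinuum K) (hKnt : K.Nontrivial)
    (hKE : (K ∩ E).Nonempty) (hfE : (f '' E).Subsingleton) : (f '' K).Subsingleton := by
  have hdiam : diam (f '' K) ≤ 0 := by
    simpa [diam_subsingleton hfE] using hf.2.2 K E hK hE hKnt hEnt hKE
  by_contra hfK
  exact hdiam.not_gt <|
    diam_pos (not_subsingleton_iff.mp hfK) (hK.1.image hf.1).isBounded

theorem image_nontrivial {C : ℝ} (hbt : BoundedTurningWith X C) (hf : BranchedQS η f)
    (hnc : ∃ p q : X, f p ≠ f q) {E : Set X} (hE : IsContinuum E) (hnt : E.Nontrivial) :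
    (f '' E).Nontrivial := by
  by_contra hfE
  rw [not_nontrivial_iff] at hfE
  obtain ⟨x₀, hx₀, -⟩ := id hnt
  have hconst : ∀ x, f x = f x₀ := by
    intro x
    obtain rfl | hx := eq_or_ne x x₀
    · rfl
    obtain ⟨K, hK, hxK, hx₀K, -⟩ := hbt x x₀
    exact hf.image_subsingleton_of_inter_nonempty hE hnt hK ⟨x, hxK, x₀, hx₀K, hx⟩
      ⟨x₀, hx₀K, hx₀⟩ hfE (mem_image_of_mem f hxK) (mem_image_of_mem f hx₀K)
  obtain ⟨p, q, hpq⟩ := hnc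
  exact hpq ((hconst p).trans (hconst q).symm)

end BranchedQS

theorem branchedQS_not_collapse_general {X Y : Type*} [MetricSpace X] [MetricSpace Y]
    (C : ℝ) (hbt : BoundedTurningWith X C)
    (η : ℝ → ℝ) (f : X → Y) (hf : BranchedQS η f) (hnc : ∃ p q : X, f p ≠ f q)
    (E : Set X) (hE : IsContinuum E) (hnt : E.Nontrivial) :
    0 < Metric.diam (f '' E) :=
  diam_pos (hf.image_nontrivial hbt hnc hE hnt) (hE.1.image hf.1).isBounded

/-- A non-constant branched quasisymmetry on a bounded turning space cannot collapse any
non-trivial continuum to a point. -/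
theorem branchedQS_not_collapse {X Y : Type*} [MetricSpace X] [MetricSpace Y]
    (C : ℝ) (hC : 1 ≤ C) (hbt : BoundedTurningWith X C)
    (η : ℝ → ℝ) (f : X → Y) (hf : BranchedQS η f) (hnc : ∃ p q : X, f p ≠ f q)
    (E : Set X) (hE : IsContinuum E) (hnt : E.Nontrivial) :
    0 < Metric.diam (f '' E) :=
  branchedQS_not_collapse_general C hbt η f hf hnc E hE hnt
end

section
/- Let X and Y be metric spaces and let f : X → Y be Lipschitz light with constant L. Then for every continuum K ⊆ X, L^{-1}·diam(K) ≤ diam(f(K)) ≤ L·diam(K). -/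
open Metric Set
open scoped ENNReal NNReal

/-! The upper bound is the Lipschitz bound. For the lower bound, fix `r > diam (f '' K)`: a
connected set is joined by `r`-paths inside itself for every `r > 0`, so `K` lies in a single
`r`-component of `f ⁻¹' (f '' K)`, and lightness bounds `diam K` by `L * r`. -/

namespace SameRComponent

variable {X : Type*} [PseudoMetricSpace X] {r : ℝ} {S : Set X} {x y z : X}

lemma of_dist_le (hx : x ∈ S) (hy : y ∈ S) (hxy : dist x y ≤ r) : SameRComponent r S x y :=
  ⟨[x, y], ⟨by simp [hx, hy], List.isChain_pair.2 hxy⟩, rfl, rfl⟩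

lemma mono {T : Set X} (hST : S ⊆ T) (h : SameRComponent r S x y) : SameRComponent r T x y :=
  let ⟨l, ⟨hmem, hchain⟩, hx, hy⟩ := h
  ⟨l, ⟨fun z hz => hST (hmem z hz), hchain⟩, hx, hy⟩

end SameRComponent

theorem IsPreconnected.sameRComponent {X : Type*} [PseudoMetricSpace X] {K : Set X}
    (hK : IsPreconnected K) {r : ℝ} (hr : 0 < r) {x y : X} (hx : x ∈ K) (hy : y ∈ K) :
    SameRComponent r K x y := by
  refine hK.induction₂ _ (fun a ha => ?_) (fun _ _ _ _ _ _ => .trans hr.le)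
    (fun _ _ _ _ => .symm) hx hy
  filter_upwards [self_mem_nhdsWithin, nhdsWithin_le_nhds (ball_mem_nhds a hr)] with b hb hab
  exact .of_dist_le ha hb (dist_comm a b ▸ hab.le)

namespace LipschitzLightWith

variable {X Y : Type*} [PseudoMetricSpace X] [PseudoMetricSpace Y] {C : ℝ} {f : X → Y}

theorem lipschitzWith (hf : LipschitzLightWith C f) (hC : 0 ≤ C) : LipschitzWith ⟨C, hC⟩ f :=
  .of_dist_le_mul hf.1

theorem inv_mul_diam_le_diam_image (hf : LipschitzLightWith C f) (hC : 0 < C) {K : Set X}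
    (hK : IsPreconnected K) (hbdd : Bornology.IsBounded (f '' K)) :
    C⁻¹ * diam K ≤ diam (f '' K) := by
  refine le_of_forall_gt_imp_ge_of_dense fun r hr => ?_
  have hr₀ : 0 < r := diam_nonneg.trans_lt hr
  have hW : ediam (f '' K) ≤ ENNReal.ofReal r :=
    ediam_le_of_forall_dist_le fun _ ha _ hb => (dist_le_diam_of_mem hbdd ha hb).trans hr.le
  rw [inv_mul_le_iff₀ hC]
  exact diam_le_of_forall_dist_le (by positivity) fun x hx y hy =>
    hf.2 r hr₀ _ hW x y ((hK.sameRComponent hr₀ hx hy).mono (subset_preimage_image f K))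

end LipschitzLightWith

/-- A Lipschitz light map with constant `L` roughly preserves the diameter of continua:
`L⁻¹ · diam K ≤ diam (f '' K) ≤ L · diam K`. -/
theorem lipschitzLight_diam_continuum {X Y : Type*} [MetricSpace X] [MetricSpace Y]
    (L : ℝ) (hL : 0 < L) (f : X → Y) (hf : LipschitzLightWith L f)
    (K : Set X) (hK : IsContinuum K) :
    L⁻¹ * Metric.diam K ≤ Metric.diam (f '' K) ∧
      Metric.diam (f '' K) ≤ L * Metric.diam K := by
  obtain ⟨hcompact, hconnected⟩ := hK
  have hlip := hf.lipschitzWith hL.le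
  exact ⟨hf.inv_mul_diam_le_diam_image hL hconnected.isPreconnected
      (hlip.isBounded_image hcompact.isBounded), hlip.diam_image_le K hcompact.isBounded⟩
end
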